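/- arXiv:2209.04625 — 2 statements merged into one kernel-verified Lean document; each statement's English description precedes it below -/
import Mathlib

section
/- Let n ≥ 1 and let Ω ⊆ ℝⁿ be a nonempty bounded open set. Let u be continuous on the closure of Ω, twice differentiable on Ω with Δu(x) = −2 for all x ∈ Ω, and suppose u = 0 on the frontier of Ω. Then u(x) > 0 for every x ∈ Ω. -/
/-!
At a minimum `x₀` of `u` on `closure Ω` lying in `Ω`, the restriction of `u` to every line
`t ↦ x₀ + t • v` has a local minimum at `0`, so by the second-derivative test every diagonal
entry of the Hessian is nonnegative and `Δu(x₀) ≥ 0`, contradicting `Δu = -2`. Hence the minimum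
of `u` over the compact set `closure Ω` is attained only on `frontier Ω`, where `u = 0`; so `u ≥ 0`
on `Ω`, and a zero of `u` in `Ω` would be such a forbidden interior minimum.
-/

open Filter Topology Metric

/-- The Laplacian of `u` at `x`: the trace of the Hessian (second Fréchet derivative),
computed as the sum of the diagonal entries in the standard orthonormal basis. -/
noncomputable def laplacian {n : ℕ} (u : EuclideanSpace ℝ (Fin n) → ℝ)
    (x : EuclideanSpace ℝ (Fin n)) : ℝ :=
  ∑ i : Fin n, fderiv ℝ (fderiv ℝ u) x (EuclideanSpace.single i 1) (EuclideanSpace.single i 1)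

theorem IsLocalMin.deriv_deriv_nonneg {f : ℝ → ℝ} {a : ℝ} (h : IsLocalMin f a)
    (hc : ContinuousAt f a) : 0 ≤ deriv (deriv f) a := by
  by_contra! hneg
  have hmax : IsLocalMax f a := isLocalMax_of_deriv_deriv_neg hneg h.deriv_eq_zero hc
  have hconst : f =ᶠ[𝓝 a] fun _ ↦ f a := (h.and hmax).mono fun _ hx ↦ le_antisymm hx.2 hx.1
  have hderiv : deriv f =ᶠ[𝓝 a] fun _ ↦ 0 := by simpa using hconst.deriv
  simp [hderiv.deriv_eq] at hneg

theorem IsLocalMin.fderiv_fderiv_apply_self_nonneg {E : Type*} [NormedAddCommGroup E]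
    [NormedSpace ℝ E] {u : E → ℝ} {a : E} (h : IsLocalMin u a)
    (hu : ∀ᶠ x in 𝓝 a, DifferentiableAt ℝ u x) (hu' : DifferentiableAt ℝ (fderiv ℝ u) a)
    (v : E) : 0 ≤ fderiv ℝ (fderiv ℝ u) a v v := by
  set line : ℝ → E := fun t ↦ a + t • v
  have hline : ∀ t, HasDerivAt line v t := fun t ↦ by
    simpa [line] using ((hasDerivAt_id t).smul_const v).const_add a
  have hline0 : line 0 = a := by simp [line]
  have hu_line : ∀ᶠ t in 𝓝 0, DifferentiableAt ℝ u (line t) :=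
    (hline 0).continuousAt.tendsto.eventually (hline0 ▸ hu)
  have hderiv : deriv (u ∘ line) =ᶠ[𝓝 0] fun t ↦ fderiv ℝ u (line t) v :=
    hu_line.mono fun t ht ↦ (ht.hasFDerivAt.comp_hasDerivAt t (hline t)).deriv
  have hderiv2 : HasDerivAt (fun t ↦ fderiv ℝ u (line t) v) (fderiv ℝ (fderiv ℝ u) a v v) 0 :=
    (ContinuousLinearMap.apply ℝ ℝ v).hasFDerivAt.comp (line 0)
      (hline0 ▸ hu'.hasFDerivAt) |>.comp_hasDerivAt 0 (hline 0)
  have hmin : IsLocalMin (u ∘ line) 0 := (hline0 ▸ h).comp_continuous (hline 0).continuousAt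
  have hcont : ContinuousAt (u ∘ line) 0 :=
    (hline0 ▸ hu.self_of_nhds).continuousAt.comp (hline 0).continuousAt
  simpa [hderiv.deriv_eq, hderiv2.deriv] using hmin.deriv_deriv_nonneg hcont

theorem IsLocalMin.laplacian_nonneg {n : ℕ} {u : EuclideanSpace ℝ (Fin n) → ℝ}
    {a : EuclideanSpace ℝ (Fin n)} (h : IsLocalMin u a)
    (hu : ∀ᶠ x in 𝓝 a, DifferentiableAt ℝ u x) (hu' : DifferentiableAt ℝ (fderiv ℝ u) a) :
    0 ≤ laplacian u a :=
  Finset.sum_nonneg fun _ _ ↦ h.fderiv_fderiv_apply_self_nonneg hu hu' _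

theorem positivity_of_solution_general
    {n : ℕ} (Ω : Set (EuclideanSpace ℝ (Fin n)))
    (hΩo : IsOpen Ω) (hΩb : Bornology.IsBounded Ω)
    (u : EuclideanSpace ℝ (Fin n) → ℝ)
    (hcont : ContinuousOn u (closure Ω))
    (hdiff : ∀ x ∈ Ω, DifferentiableAt ℝ u x ∧ DifferentiableAt ℝ (fderiv ℝ u) x)
    (hlap : ∀ x ∈ Ω, laplacian u x = -2)
    (hbdry : ∀ x ∈ frontier Ω, u x = 0) :
    ∀ x ∈ Ω, 0 < u x := by
  have no_interior_min : ∀ y ∈ Ω, ¬ IsMinOn u (closure Ω) y := fun y hy hmin ↦ by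
    have hloc : IsLocalMin u y :=
      hmin.isLocalMin (mem_of_superset (hΩo.mem_nhds hy) subset_closure)
    have hu : ∀ᶠ x in 𝓝 y, DifferentiableAt ℝ u x :=
      eventually_of_mem (hΩo.mem_nhds hy) fun x hx ↦ (hdiff x hx).1
    linarith [hloc.laplacian_nonneg hu (hdiff y hy).2, hlap y hy]
  intro x hx
  obtain ⟨x₀, hx₀, hmin⟩ :=
    hΩb.isCompact_closure.exists_isMinOn ⟨x, subset_closure hx⟩ hcont
  have hx₀_frontier : x₀ ∈ frontier Ω := by
    rw [hΩo.frontier_eq]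
    exact ⟨hx₀, fun hx₀Ω ↦ no_interior_min x₀ hx₀Ω hmin⟩
  have hux₀ : u x₀ = 0 := hbdry x₀ hx₀_frontier
  refine lt_of_le_of_ne (hux₀ ▸ hmin (subset_closure hx)) fun hux ↦ no_interior_min x hx ?_
  intro y hy
  calc u x = u x₀ := by rw [hux₀, hux]
    _ ≤ u y := hmin hy

/-- Positivity lemma in the classical setting `p = 2`: a solution of `Δu = −2`
(i.e. `−Δ₂ᴺ u = 1`) vanishing on `∂Ω` is positive in `Ω`. -/
theorem positivity_of_solution
    {n : ℕ} (hn : 1 ≤ n) (Ω : Set (EuclideanSpace ℝ (Fin n)))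
    (hΩo : IsOpen Ω) (hΩb : Bornology.IsBounded Ω) (hΩne : Ω.Nonempty)
    (u : EuclideanSpace ℝ (Fin n) → ℝ)
    (hcont : ContinuousOn u (closure Ω))
    (hdiff : ∀ x ∈ Ω, DifferentiableAt ℝ u x ∧ DifferentiableAt ℝ (fderiv ℝ u) x)
    (hlap : ∀ x ∈ Ω, laplacian u x = -2)
    (hbdry : ∀ x ∈ frontier Ω, u x = 0) :
    ∀ x ∈ Ω, 0 < u x :=
  positivity_of_solution_general Ω hΩo hΩb u hcont hdiff hlap hbdry
end

section
/- Let n ≥ 1 and let Ω ⊆ ℝⁿ be a bounded open set. Let u be continuous on the closure of Ω, twice differentiable on Ω with Δu(x) = −2 for all x ∈ Ω, and suppose u = 0 on the frontier of Ω. Suppose x̄ ∈ ℝⁿ and R > 0 are such that Ω is contained in the closed ball of radius R about x̄, and let P be a point of the frontier of Ω with ‖P − x̄‖ = R. Then limsup over y → P with y ∈ Ω of u(y)/‖y − P‖ is at most 2R/n. -/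
/-! For `c > 1/n` the function `u + c‖· - x̄‖²` has Laplacian `2nc - 2 > 0`, so by the second
derivative test it has no interior maximum, and on `Ω` it is bounded by its boundary values,
which are at most `cR²`. Letting `c ↓ 1/n` gives `u y ≤ (R² - ‖y - x̄‖²)/n`, and because `P` is
at distance `R` from `x̄`, the right-hand side is at most `2R‖y - P‖/n`. -/

open Filter Topology Metric

open Set in
theorem IsLocalMax.hasDerivAt_deriv_nonpos {φ φ' : ℝ → ℝ} {a m : ℝ} (hmax : IsLocalMax φ a)
    (hφ : ∀ᶠ t in 𝓝 a, HasDerivAt φ (φ' t) t) (hφ' : HasDerivAt φ' m a) : m ≤ 0 := by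
  -- if `m > 0`, then `φ' > 0` just right of `a`, so `φ` increases there (mean value theorem)
  by_contra! hm
  have hφ'a : φ' a = 0 := hmax.hasDerivAt_eq_zero hφ.self_of_nhds
  have hpos : ∀ᶠ t in 𝓝[>] a, 0 < φ' t := by
    filter_upwards [((hasDerivAt_iff_tendsto_slope.1 hφ').mono_left
      (nhdsGT_le_nhdsNE a)).eventually (eventually_gt_nhds hm), self_mem_nhdsWithin]
      with t hslope (ht : a < t)
    exact pos_of_slope_pos ht hslope hφ'a
  obtain ⟨c, hac : a < c, hc⟩ := mem_nhdsGT_iff_exists_Ioo_subset.1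
    (((hφ.and hmax).filter_mono nhdsWithin_le_nhds).and hpos)
  obtain ⟨b, hab, hbc⟩ := exists_between hac
  have hcont : ContinuousOn φ (Icc a b) := by
    intro t ht
    rcases ht.1.eq_or_lt with rfl | hat
    · exact hφ.self_of_nhds.continuousAt.continuousWithinAt
    · exact (hc ⟨hat, ht.2.trans_lt hbc⟩).1.1.continuousAt.continuousWithinAt
  obtain ⟨ξ, hξ, hslope⟩ := exists_hasDerivAt_eq_slope φ φ' hab hcont
    fun t ht => (hc ⟨ht.1, ht.2.trans hbc⟩).1.1
  have hφb : φ b ≤ φ a := (hc ⟨hab, hbc⟩).1.2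
  have hφ'ξ : 0 < φ' ξ := (hc ⟨hξ.1, hξ.2.trans hbc⟩).2
  rw [hslope, div_pos_iff_of_pos_right (sub_pos.2 hab)] at hφ'ξ
  linarith

theorem IsLocalMax.fderiv_fderiv_apply_self_nonpos {E : Type*} [NormedAddCommGroup E]
    [NormedSpace ℝ E] {g : E → ℝ} {x : E} (hmax : IsLocalMax g x)
    (hg : ∀ᶠ y in 𝓝 x, DifferentiableAt ℝ g y) (hg' : DifferentiableAt ℝ (fderiv ℝ g) x)
    (v : E) : fderiv ℝ (fderiv ℝ g) x v v ≤ 0 := by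
  set ℓ : ℝ → E := fun t => x + t • v
  have hℓ : ∀ t, HasDerivAt ℓ v t := fun t => by
    simpa only [id, one_smul] using ((hasDerivAt_id t).smul_const v).const_add x
  have hℓ0 : x = ℓ 0 := by simp [ℓ]
  have hmaxℓ : IsLocalMax (g ∘ ℓ) 0 := (hℓ0 ▸ hmax).comp_continuous (hℓ 0).continuousAt
  have hgℓ : ∀ᶠ t in 𝓝 0, HasDerivAt (g ∘ ℓ) (fderiv ℝ g (ℓ t) v) t := by
    filter_upwards [(hℓ 0).continuousAt.eventually (hℓ0 ▸ hg)] with t ht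
    exact ht.hasFDerivAt.comp_hasDerivAt t (hℓ t)
  have hgℓ' : HasDerivAt (fun t => fderiv ℝ g (ℓ t) v) (fderiv ℝ (fderiv ℝ g) x v v) 0 :=
    (hg'.hasFDerivAt.comp_hasDerivAt_of_eq 0 (hℓ 0) hℓ0).clm_apply (hasDerivAt_const 0 v)
      |>.congr_deriv (by simp)
  exact hmaxℓ.hasDerivAt_deriv_nonpos hgℓ hgℓ'

theorem IsLocalMax.laplacian_nonpos {n : ℕ} {g : EuclideanSpace ℝ (Fin n) → ℝ}
    {x : EuclideanSpace ℝ (Fin n)} (hmax : IsLocalMax g x)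
    (hg : ∀ᶠ y in 𝓝 x, DifferentiableAt ℝ g y) (hg' : DifferentiableAt ℝ (fderiv ℝ g) x) :
    laplacian g x ≤ 0 :=
  Finset.sum_nonpos fun _ _ => hmax.fderiv_fderiv_apply_self_nonpos hg hg' _

section
variable {E F : Type*} [NormedAddCommGroup E] [NormedSpace ℝ E] [NormedAddCommGroup F]
  [NormedSpace ℝ F] {f g : E → F} {x : E}

theorem fderiv_add_eventuallyEq (hf : ∀ᶠ y in 𝓝 x, DifferentiableAt ℝ f y)
    (hg : ∀ᶠ y in 𝓝 x, DifferentiableAt ℝ g y) :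
    fderiv ℝ (fun y => f y + g y) =ᶠ[𝓝 x] fderiv ℝ f + fderiv ℝ g := by
  filter_upwards [hf, hg] with y hfy hgy
  exact fderiv_add hfy hgy

theorem differentiableAt_fderiv_add (hf : ∀ᶠ y in 𝓝 x, DifferentiableAt ℝ f y)
    (hg : ∀ᶠ y in 𝓝 x, DifferentiableAt ℝ g y) (hf' : DifferentiableAt ℝ (fderiv ℝ f) x)
    (hg' : DifferentiableAt ℝ (fderiv ℝ g) x) :
    DifferentiableAt ℝ (fderiv ℝ (fun y => f y + g y)) x :=
  (hf'.add hg').congr_of_eventuallyEq (fderiv_add_eventuallyEq hf hg)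

end

theorem laplacian_add {n : ℕ} {f g : EuclideanSpace ℝ (Fin n) → ℝ}
    {x : EuclideanSpace ℝ (Fin n)} (hf : ∀ᶠ y in 𝓝 x, DifferentiableAt ℝ f y)
    (hg : ∀ᶠ y in 𝓝 x, DifferentiableAt ℝ g y) (hf' : DifferentiableAt ℝ (fderiv ℝ f) x)
    (hg' : DifferentiableAt ℝ (fderiv ℝ g) x) :
    laplacian (fun y => f y + g y) x = laplacian f x + laplacian g x := by
  simp only [laplacian, (fderiv_add_eventuallyEq hf hg).fderiv_eq, fderiv_add hf' hg',
    _root_.add_apply, Finset.sum_add_distrib]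

section
variable {F : Type*} [NormedAddCommGroup F] [InnerProductSpace ℝ F] (c : ℝ) (a : F)

open scoped InnerProductSpace

theorem hasFDerivAt_mul_norm_sub_sq (x : F) :
    HasFDerivAt (fun y => c * ‖y - a‖ ^ 2) ((2 * c) • innerSL ℝ (x - a)) x := by
  refine (((hasStrictFDerivAt_norm_sq (x - a)).hasFDerivAt.comp x
    ((hasFDerivAt_id x).sub_const a)).const_mul c).congr_fderiv ?_
  ext v
  simp
  ring

theorem fderiv_mul_norm_sub_sq :
    fderiv ℝ (fun y => c * ‖y - a‖ ^ 2) = fun x => (2 * c) • innerSL ℝ (x - a) :=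
  funext fun x => (hasFDerivAt_mul_norm_sub_sq c a x).fderiv

theorem hasFDerivAt_fderiv_mul_norm_sub_sq (x : F) :
    HasFDerivAt (fderiv ℝ (fun y => c * ‖y - a‖ ^ 2)) ((2 * c) • innerSL ℝ) x := by
  rw [fderiv_mul_norm_sub_sq]
  exact (((2 * c) • innerSL ℝ : F →L[ℝ] F →L[ℝ] ℝ).hasFDerivAt.comp x
    ((hasFDerivAt_id x).sub_const a)).congr_fderiv (ContinuousLinearMap.comp_id _)

theorem fderiv_fderiv_mul_norm_sub_sq_apply (x v w : F) :
    fderiv ℝ (fderiv ℝ (fun y => c * ‖y - a‖ ^ 2)) x v w = 2 * c * ⟪v, w⟫_ℝ := by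
  rw [(hasFDerivAt_fderiv_mul_norm_sub_sq c a x).fderiv]
  rfl

end

theorem laplacian_mul_norm_sub_sq {n : ℕ} (c : ℝ) (a x : EuclideanSpace ℝ (Fin n)) :
    laplacian (fun y => c * ‖y - a‖ ^ 2) x = 2 * n * c := by
  simp [laplacian, fderiv_fderiv_mul_norm_sub_sq_apply]
  ring

theorem le_of_frontier_le_of_laplacian_pos {n : ℕ} {Ω : Set (EuclideanSpace ℝ (Fin n))}
    (hΩo : IsOpen Ω) (hΩb : Bornology.IsBounded Ω) {g : EuclideanSpace ℝ (Fin n) → ℝ}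
    (hcont : ContinuousOn g (closure Ω))
    (hdiff : ∀ x ∈ Ω, DifferentiableAt ℝ g x ∧ DifferentiableAt ℝ (fderiv ℝ g) x)
    (hlap : ∀ x ∈ Ω, 0 < laplacian g x) {M : ℝ} (hM : ∀ x ∈ frontier Ω, g x ≤ M) :
    ∀ y ∈ closure Ω, g y ≤ M := by
  intro y hy
  obtain ⟨x, hxΩ, hmax⟩ := hΩb.isCompact_closure.exists_isMaxOn ⟨y, hy⟩ hcont
  have hx : x ∈ frontier Ω := by
    refine hΩo.frontier_eq ▸ ⟨hxΩ, fun hx => ?_⟩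
    have hloc : IsLocalMax g x :=
      mem_of_superset (hΩo.mem_nhds hx) fun z hz => hmax (subset_closure hz)
    have hg : ∀ᶠ z in 𝓝 x, DifferentiableAt ℝ g z :=
      eventually_of_mem (hΩo.mem_nhds hx) fun z hz => (hdiff z hz).1
    exact (hlap x hx).not_ge (hloc.laplacian_nonpos hg (hdiff x hx).2)
  exact (hmax hy).trans (hM x hx)

section Comparison

variable {n : ℕ} {Ω : Set (EuclideanSpace ℝ (Fin n))} {u : EuclideanSpace ℝ (Fin n) → ℝ}
  {a : EuclideanSpace ℝ (Fin n)} {R : ℝ}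

theorem le_mul_sq_sub_norm_sq_of_laplacian_eq_neg_two (hΩo : IsOpen Ω)
    (hΩb : Bornology.IsBounded Ω) (hcont : ContinuousOn u (closure Ω))
    (hdiff : ∀ x ∈ Ω, DifferentiableAt ℝ u x ∧ DifferentiableAt ℝ (fderiv ℝ u) x)
    (hlap : ∀ x ∈ Ω, laplacian u x = -2) (hbdry : ∀ x ∈ frontier Ω, u x = 0)
    (hsub : Ω ⊆ closedBall a R) {c : ℝ} (hc : 1 < n * c) :
    ∀ y ∈ Ω, u y ≤ c * (R ^ 2 - ‖y - a‖ ^ 2) := by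
  intro y hy
  have hu : ∀ x ∈ Ω, ∀ᶠ z in 𝓝 x, DifferentiableAt ℝ u z := fun x hx =>
    eventually_of_mem (hΩo.mem_nhds hx) fun z hz => (hdiff z hz).1
  have hq (x) : ∀ᶠ z in 𝓝 x, DifferentiableAt ℝ (fun y => c * ‖y - a‖ ^ 2) z :=
    Eventually.of_forall fun z => (hasFDerivAt_mul_norm_sub_sq c a z).differentiableAt
  have hq' (x) : DifferentiableAt ℝ (fderiv ℝ (fun y => c * ‖y - a‖ ^ 2)) x :=
    (hasFDerivAt_fderiv_mul_norm_sub_sq c a x).differentiableAt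
  have hlap_pos : ∀ x ∈ Ω, 0 < laplacian (fun y => u y + c * ‖y - a‖ ^ 2) x := fun x hx => by
    rw [laplacian_add (hu x hx) (hq x) (hdiff x hx).2 (hq' x), hlap x hx,
      laplacian_mul_norm_sub_sq]
    linarith
  have hfrontier : ∀ x ∈ frontier Ω, u x + c * ‖x - a‖ ^ 2 ≤ c * R ^ 2 := fun x hx => by
    have hxR : ‖x - a‖ ≤ R := mem_closedBall_iff_norm.1 <|
      closure_minimal hsub isClosed_closedBall (frontier_subset_closure hx)
    have hc0 : 0 ≤ c := (pos_of_mul_pos_right (one_pos.trans hc) n.cast_nonneg).le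
    rw [hbdry x hx, zero_add]
    gcongr
  have hmax := le_of_frontier_le_of_laplacian_pos hΩo hΩb
    (g := fun y => u y + c * ‖y - a‖ ^ 2) (hcont.add (by fun_prop))
    (fun x hx => ⟨(hdiff x hx).1.add (hq x).self_of_nhds,
      differentiableAt_fderiv_add (hu x hx) (hq x) (hdiff x hx).2 (hq' x)⟩)
    hlap_pos hfrontier y (subset_closure hy)
  linarith

theorem le_sq_sub_norm_sq_div_of_laplacian_eq_neg_two (hn : 1 ≤ n) (hΩo : IsOpen Ω)
    (hΩb : Bornology.IsBounded Ω) (hcont : ContinuousOn u (closure Ω))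
    (hdiff : ∀ x ∈ Ω, DifferentiableAt ℝ u x ∧ DifferentiableAt ℝ (fderiv ℝ u) x)
    (hlap : ∀ x ∈ Ω, laplacian u x = -2) (hbdry : ∀ x ∈ frontier Ω, u x = 0)
    (hsub : Ω ⊆ closedBall a R) :
    ∀ y ∈ Ω, u y ≤ (R ^ 2 - ‖y - a‖ ^ 2) / n := by
  intro y hy
  have hn0 : (0 : ℝ) < n := by exact_mod_cast hn
  have hlim : Tendsto (fun c => c * (R ^ 2 - ‖y - a‖ ^ 2)) (𝓝[>] (1 / n))
      (𝓝 ((R ^ 2 - ‖y - a‖ ^ 2) / n)) := by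
    refine (Continuous.tendsto' (by fun_prop) _ _ ?_).mono_left nhdsWithin_le_nhds
    ring
  refine ge_of_tendsto hlim (eventually_nhdsWithin_of_forall fun c (hc : 1 / n < c) => ?_)
  rw [div_lt_iff₀ hn0, mul_comm] at hc
  exact le_mul_sq_sub_norm_sq_of_laplacian_eq_neg_two hΩo hΩb hcont hdiff hlap hbdry hsub hc y hy

end Comparison

theorem sq_norm_sub_sub_sq_norm_sub_le {E : Type*} [SeminormedAddCommGroup E] {a p y : E}
    (h : ‖y - a‖ ≤ ‖p - a‖) : ‖p - a‖ ^ 2 - ‖y - a‖ ^ 2 ≤ 2 * ‖p - a‖ * ‖y - p‖ := by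
  have htri := norm_sub_norm_le (p - a) (y - a)
  rw [sub_sub_sub_cancel_right, norm_sub_rev p y] at htri
  nlinarith [norm_nonneg (y - a)]

theorem Real.limsup_le_of_eventually_le {α : Type*} {f : α → ℝ} {l : Filter α} {b : ℝ}
    (hb : 0 ≤ b) (h : ∀ᶠ x in l, f x ≤ b) : limsup f l ≤ b := by
  rw [limsup_eq]
  by_cases hbdd : BddBelow {a | ∀ᶠ x in l, f x ≤ a}
  · exact csInf_le hbdd h
  · rw [Real.sInf_of_not_bddBelow hbdd]
    exact hb

theorem upper_neumann_bound_general
    {n : ℕ} (hn : 1 ≤ n) (Ω : Set (EuclideanSpace ℝ (Fin n)))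
    (hΩo : IsOpen Ω) (hΩb : Bornology.IsBounded Ω)
    (u : EuclideanSpace ℝ (Fin n) → ℝ)
    (hcont : ContinuousOn u (closure Ω))
    (hdiff : ∀ x ∈ Ω, DifferentiableAt ℝ u x ∧ DifferentiableAt ℝ (fderiv ℝ u) x)
    (hlap : ∀ x ∈ Ω, laplacian u x = -2)
    (hbdry : ∀ x ∈ frontier Ω, u x = 0)
    (xbar : EuclideanSpace ℝ (Fin n)) (R : ℝ)
    (hsub : Ω ⊆ Metric.closedBall xbar R)
    (P : EuclideanSpace ℝ (Fin n))
    (hPR : ‖P - xbar‖ = R) :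
    Filter.limsup (fun y => u y / ‖y - P‖) (𝓝[Ω] P) ≤ 2 * R / n := by
  have hR : 0 ≤ R := hPR ▸ norm_nonneg _
  have hu := le_sq_sub_norm_sq_div_of_laplacian_eq_neg_two hn hΩo hΩb hcont hdiff hlap hbdry hsub
  refine Real.limsup_le_of_eventually_le (by positivity) (eventually_nhdsWithin_of_forall
    fun y hy => div_le_of_le_mul₀ (norm_nonneg _) (by positivity) ?_)
  have hyP : ‖y - xbar‖ ≤ ‖P - xbar‖ := hPR ▸ mem_closedBall_iff_norm.1 (hsub hy)
  calc u y ≤ (R ^ 2 - ‖y - xbar‖ ^ 2) / n := hu y hy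
    _ ≤ 2 * R * ‖y - P‖ / n := by
      gcongr
      simpa only [hPR] using sq_norm_sub_sub_sq_norm_sub_le hyP
    _ = 2 * R / n * ‖y - P‖ := by ring

/-- Upper Neumann bound at a farthest boundary point: `−∂u/∂ν ≤ 2R/n`, encoded via
the limsup of `u(y)/‖y − P‖` as `y → P` inside `Ω`. -/
theorem upper_neumann_bound
    {n : ℕ} (hn : 1 ≤ n) (Ω : Set (EuclideanSpace ℝ (Fin n)))
    (hΩo : IsOpen Ω) (hΩb : Bornology.IsBounded Ω)
    (u : EuclideanSpace ℝ (Fin n) → ℝ)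
    (hcont : ContinuousOn u (closure Ω))
    (hdiff : ∀ x ∈ Ω, DifferentiableAt ℝ u x ∧ DifferentiableAt ℝ (fderiv ℝ u) x)
    (hlap : ∀ x ∈ Ω, laplacian u x = -2)
    (hbdry : ∀ x ∈ frontier Ω, u x = 0)
    (xbar : EuclideanSpace ℝ (Fin n)) (R : ℝ) (hR : 0 < R)
    (hsub : Ω ⊆ Metric.closedBall xbar R)
    (P : EuclideanSpace ℝ (Fin n)) (hPf : P ∈ frontier Ω)
    (hPR : ‖P - xbar‖ = R) :
    Filter.limsup (fun y => u y / ‖y - P‖) (𝓝[Ω] P) ≤ 2 * R / n :=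
  upper_neumann_bound_general hn Ω hΩo hΩb u hcont hdiff hlap hbdry xbar R hsub P hPR
end
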